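/- arXiv:2505.10826 — 2 statements merged into one kernel-verified Lean document; each statement's English description precedes it below -/
import Mathlib

section
/- If r : ℝ → ℝ is twice differentiable and satisfies the ODE r''/(1 + r'²) = cot r on an interval where 0 < r < π, then the function t ↦ sin²(r(t))/(1 + r'(t)²) is constant on that interval. -/
open Real Set

/-- First integral: for a C² solution of r''/(1+r'²) = cot r with 0 < r < π on an
interval, the function t ↦ sin²(r(t))/(1 + r'(t)²) is constant on that interval. -/
theorem stmt_1 (a b : ℝ) (r : ℝ → ℝ) (hr : ContDiff ℝ 2 r)
    (hrange : ∀ t ∈ Ioo a b, 0 < r t ∧ r t < π)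
    (hODE : ∀ t ∈ Ioo a b,
      deriv (deriv r) t / (1 + (deriv r t) ^ 2) = Real.cot (r t)) :
    ∀ s ∈ Ioo a b, ∀ t ∈ Ioo a b,
      Real.sin (r s) ^ 2 / (1 + (deriv r s) ^ 2)
        = Real.sin (r t) ^ 2 / (1 + (deriv r t) ^ 2) := by
  have hr1 : Differentiable ℝ r := hr.differentiable (by norm_num)
  have hr2 : Differentiable ℝ (deriv r) := by
    have h := (contDiff_succ_iff_deriv.mp (by exact_mod_cast hr : ContDiff ℝ (1+1) r)).2.2
    exact h.differentiable (by norm_num)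
  set E : ℝ → ℝ := fun t => Real.sin (r t) ^ 2 / (1 + (deriv r t) ^ 2) with hE
  have key : ∀ x ∈ Ioo a b, HasDerivAt E 0 x := by
    intro x hx
    obtain ⟨h0, hπ⟩ := hrange x hx
    have hsin : Real.sin (r x) > 0 := Real.sin_pos_of_pos_of_lt_pi h0 hπ
    have hden : (1 : ℝ) + (deriv r x) ^ 2 ≠ 0 := by positivity
    have hA : HasDerivAt (fun t => Real.sin (r t) ^ 2)
        (2 * Real.sin (r x) ^ 1 * (Real.cos (r x) * deriv r x)) x := by
      have := ((hr1 x).hasDerivAt.sin).fun_pow 2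
      simpa using this
    have hB : HasDerivAt (fun t => 1 + (deriv r t) ^ 2)
        (2 * deriv r x ^ 1 * deriv (deriv r) x) x := by
      have := ((hr2 x).hasDerivAt.pow 2).const_add (1 : ℝ)
      simpa using this
    have hdd : deriv (deriv r) x = Real.cot (r x) * (1 + (deriv r x) ^ 2) := by
      have := hODE x hx
      field_simp at this
      linarith [this]
    have hdiv := hA.div hB hden
    have hzero : (2 * Real.sin (r x) ^ 1 * (Real.cos (r x) * deriv r x) *
          (1 + (deriv r x) ^ 2) -
          Real.sin (r x) ^ 2 * (2 * deriv r x ^ 1 * deriv (deriv r) x)) /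
          (1 + (deriv r x) ^ 2) ^ 2 = 0 := by
      rw [hdd, Real.cot_eq_cos_div_sin]
      field_simp
      ring
    rw [hzero] at hdiv
    exact hdiv
  intro s hs t ht
  have hconv : Convex ℝ (Ioo a b) := convex_Ioo a b
  have hdiff : DifferentiableOn ℝ E (Ioo a b) := fun x hx =>
    ((key x hx).differentiableAt).differentiableWithinAt
  have hfd : ∀ x ∈ Ioo a b, fderivWithin ℝ E (Ioo a b) x = 0 := by
    intro x hx
    rw [fderivWithin_of_isOpen isOpen_Ioo hx]
    have := (key x hx).hasFDerivAt.fderiv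
    rw [this]
    ext
    simp
  exact hconv.is_const_of_fderivWithin_eq_zero hdiff hfd hs ht
end

section
/- If r : ℝ → ℝ satisfies r'' = (1 + r'²) cot r with initial conditions r(0) = c ∈ (0, π/2) and r'(0) = 0, then r(t) ≥ c for all t in the maximal interval of existence where 0 < r < π. -/
open Real Set

/-- A solution of r'' = (1+r'²) cot r with r(0) = c ∈ (0,π/2), r'(0) = 0 satisfies
r(t) ≥ c on the interval of existence where 0 < r < π. -/
theorem stmt_2 (a b c : ℝ) (hab : 0 ∈ Ioo a b) (r : ℝ → ℝ) (hr : ContDiff ℝ 2 r)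
    (hc : 0 < c ∧ c < π / 2)
    (hrange : ∀ t ∈ Ioo a b, 0 < r t ∧ r t < π)
    (hODE : ∀ t ∈ Ioo a b,
      deriv (deriv r) t = (1 + (deriv r t) ^ 2) * Real.cot (r t))
    (h0 : r 0 = c) (h0' : deriv r 0 = 0) :
    ∀ t ∈ Ioo a b, c ≤ r t := by
  obtain ⟨hc0, hc2⟩ := hc
  have h2 : (2 : WithTop ℕ∞) = 1 + 1 := by norm_num
  have hr' : Differentiable ℝ r ∧ ContDiff ℝ 1 (deriv r) := by
    have := (contDiff_succ_iff_deriv (n := 1)).mp (h2 ▸ hr)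
    exact ⟨this.1, this.2.2⟩
  have hdr : Differentiable ℝ (deriv r) := hr'.2.differentiable one_ne_zero
  set φ : ℝ → ℝ := fun t => Real.sin (r t) ^ 2 / (1 + (deriv r t) ^ 2) with hφ
  have hden : ∀ t, (0:ℝ) < 1 + (deriv r t) ^ 2 := fun t => by positivity
  have hkey : ∀ t ∈ Ioo a b, HasDerivAt φ 0 t := by
    intro t ht
    have hsin : 0 < Real.sin (r t) :=
      Real.sin_pos_of_pos_of_lt_pi (hrange t ht).1 (hrange t ht).2
    have hnum : HasDerivAt (fun s => Real.sin (r s) ^ 2)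
        (2 * Real.sin (r t) ^ 1 * (Real.cos (r t) * deriv r t)) t :=
      (((Real.hasDerivAt_sin (r t)).comp t (hr'.1 t).hasDerivAt).pow 2)
    have hd : HasDerivAt (fun s => 1 + (deriv r s) ^ 2)
        (2 * (deriv r t) ^ 1 * deriv (deriv r) t) t :=
      (((hdr t).hasDerivAt).pow 2).const_add 1
    have := hnum.div hd (hden t).ne'
    refine this.congr_deriv ?_
    rw [hODE t ht, Real.cot_eq_cos_div_sin]
    field_simp
    ring
  have hconst : ∀ t ∈ Ioo a b, φ t = φ 0 := by
    intro t ht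
    rcases lt_trichotomy t 0 with h | h | h
    · have hsub : Icc t 0 ⊆ Ioo a b := Icc_subset_Ioo ht.1 hab.2
      have hcont : ContinuousOn φ (Icc t 0) := fun x hx =>
        ((hkey x (hsub hx)).continuousAt).continuousWithinAt
      obtain ⟨ξ, hξ, he⟩ := exists_hasDerivAt_eq_slope φ (fun _ => 0) h hcont
        (fun x hx => hkey x (hsub (Ioo_subset_Icc_self hx)))
      rcases div_eq_zero_iff.mp he.symm with h5 | h5
      · linarith
      · linarith
    · rw [h]
    · have hsub : Icc 0 t ⊆ Ioo a b := Icc_subset_Ioo hab.1 ht.2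
      have hcont : ContinuousOn φ (Icc 0 t) := fun x hx =>
        ((hkey x (hsub hx)).continuousAt).continuousWithinAt
      obtain ⟨ξ, hξ, he⟩ := exists_hasDerivAt_eq_slope φ (fun _ => 0) h hcont
        (fun x hx => hkey x (hsub (Ioo_subset_Icc_self hx)))
      rcases div_eq_zero_iff.mp he.symm with h5 | h5
      · linarith
      · linarith
  intro t ht
  have hφ0 : φ 0 = Real.sin c ^ 2 := by
    simp [hφ, h0, h0']
  have hsin : 0 < Real.sin (r t) :=
    Real.sin_pos_of_pos_of_lt_pi (hrange t ht).1 (hrange t ht).2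
  have hsc : 0 < Real.sin c := Real.sin_pos_of_pos_of_lt_pi hc0 (by linarith [Real.pi_pos])
  have hge : Real.sin c ≤ Real.sin (r t) := by
    have h1 := hconst t ht
    rw [hφ0, hφ] at h1
    have h2 : Real.sin (r t) ^ 2 = Real.sin c ^ 2 * (1 + (deriv r t) ^ 2) := by
      field_simp at h1
      linarith [h1]
    have h3 : Real.sin c ^ 2 ≤ Real.sin (r t) ^ 2 := by nlinarith [sq_nonneg (deriv r t), sq_nonneg (Real.sin c)]
    nlinarith
  by_contra hlt
  push_neg at hlt
  have : Real.sin (r t) < Real.sin c := by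
    apply Real.strictMonoOn_sin
    · constructor <;> [linarith [(hrange t ht).1, Real.pi_pos]; linarith]
    · constructor <;> linarith
    · exact hlt
  linarith
end
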